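/- For any m ∈ ℝ, B > 0 and t > 0, the Mullins grain-boundary-groove profile y₀ satisfies the boundary values ∂y₀/∂x(0,t) = m/2, ∂²y₀/∂x²(0,t) = −m/(2√2 (Bt)^{1/4} Γ(3/4)), and ∂³y₀/∂x³(0,t) = 0. -/

import Mathlib

/-- Pochhammer symbol (rising factorial) `(a)_k = a(a+1)⋯(a+k-1)`. -/
noncomputable def poch (a : ℝ) (k : ℕ) : ℝ := ∏ i ∈ Finset.range k, (a + (i : ℝ))

/-- Generalized hypergeometric function `₁F₃(a; b₁, b₂, b₃; z)`. -/
noncomputable def F13 (a b₁ b₂ b₃ z : ℝ) : ℝ :=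
  ∑' k : ℕ, poch a k / (poch b₁ k * poch b₂ k * poch b₃ k) * z ^ k / (Nat.factorial k)

/-- The Mullins grain-boundary-groove profile `y₀(x,t)`. -/
noncomputable def mullinsY (m B x t : ℝ) : ℝ :=
  m / 2 * x
  - m * x ^ 2 / (4 * Real.sqrt 2 * (B * t) ^ ((1:ℝ)/4) * Real.Gamma (3/4)) *
      F13 (1/4) (3/4) (5/4) (3/2) (x ^ 4 / (256 * B * t))
  - m * (B * t) ^ ((1:ℝ)/4) / (2 * Real.sqrt 2 * Real.Gamma (5/4)) *
      F13 (-1/4) (1/4) (1/2) (3/4) (x ^ 4 / (256 * B * t))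

/-!
The series `₁F₃` has infinite radius of convergence (ratio test), so each `F` in `y₀` is analytic
and `x ↦ F (x⁴ / c) - F 0` vanishes to order four at `0`; its derivatives of orders 1 to 3 vanish
there. Up to order three `y₀` is therefore differentiated at `0` like the quadratic
`(m/2) x - C x² F(0)`, where `C x² F(x⁴ / c)` is its middle term and `F(0) = 1`; as `y₀` is smooth,
its one-sided derivatives at `0` are the ordinary ones.
-/

open Filter Topology

lemma poch_succ (a : ℝ) (k : ℕ) : poch a (k + 1) = poch a k * (a + k) :=
  Finset.prod_range_succ _ _

lemma poch_pos {b : ℝ} (hb : 0 < b) (k : ℕ) : 0 < poch b k :=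
  Finset.prod_pos fun _ _ => by positivity

lemma poch_ne_zero {a : ℝ} (ha : ∀ i : ℕ, a + i ≠ 0) (k : ℕ) : poch a k ≠ 0 :=
  Finset.prod_ne_zero_iff.mpr fun i _ => ha i

noncomputable def F13Coeff (a b₁ b₂ b₃ : ℝ) (k : ℕ) : ℝ :=
  poch a k / (poch b₁ k * poch b₂ k * poch b₃ k * k.factorial)

section F13Coeff

variable {a b₁ b₂ b₃ : ℝ}

lemma F13Coeff_ne_zero (ha : ∀ i : ℕ, a + i ≠ 0) (hb₁ : 0 < b₁) (hb₂ : 0 < b₂) (hb₃ : 0 < b₃)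
    (k : ℕ) : F13Coeff a b₁ b₂ b₃ k ≠ 0 := by
  have := poch_pos hb₁ k; have := poch_pos hb₂ k; have := poch_pos hb₃ k
  exact div_ne_zero (poch_ne_zero ha k) (by positivity)

lemma F13Coeff_succ (hb₁ : 0 < b₁) (hb₂ : 0 < b₂) (hb₃ : 0 < b₃) (k : ℕ) :
    F13Coeff a b₁ b₂ b₃ (k + 1) = F13Coeff a b₁ b₂ b₃ k *
      ((a + k) / ((b₁ + k) * (b₂ + k) * (b₃ + k) * (k + 1))) := by
  have := poch_pos hb₁ k; have := poch_pos hb₂ k; have := poch_pos hb₃ k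
  have : (0 : ℝ) < k.factorial := mod_cast k.factorial_pos
  simp only [F13Coeff, poch_succ, Nat.factorial_succ, Nat.cast_mul, Nat.cast_succ]
  field_simp

lemma abs_hypergeometric_ratio_le (hb₁ : 0 < b₁) (hb₂ : 0 < b₂) (hb₃ : 0 < b₃) {k : ℕ} (hk : 1 ≤ k) :
    |a + k| / ((b₁ + k) * (b₂ + k) * (b₃ + k) * (k + 1)) ≤ (|a| + 1) / k := by
  have hk' : (1 : ℝ) ≤ k := mod_cast hk
  rw [div_le_div_iff₀ (by positivity) (by positivity)]
  have hnum : |a + k| ≤ (|a| + 1) * k := by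
    have := abs_add_le a k
    rw [abs_of_nonneg (by positivity : (0:ℝ) ≤ k)] at this
    nlinarith [abs_nonneg a]
  calc |a + k| * k ≤ (|a| + 1) * k * k := by gcongr
    _ = (|a| + 1) * (k * 1 * 1 * k) := by ring
    _ ≤ (|a| + 1) * ((b₁ + k) * (b₂ + k) * (b₃ + k) * (k + 1)) := by
        gcongr <;> linarith

lemma tendsto_F13Coeff_ratio (ha : ∀ i : ℕ, a + i ≠ 0) (hb₁ : 0 < b₁) (hb₂ : 0 < b₂)
    (hb₃ : 0 < b₃) :
    Tendsto (fun k => ‖F13Coeff a b₁ b₂ b₃ (k + 1)‖ / ‖F13Coeff a b₁ b₂ b₃ k‖) atTop (𝓝 0) := by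
  refine squeeze_zero' (.of_forall fun k => by positivity) ?_
    (tendsto_const_div_atTop_nhds_zero_nat (|a| + 1))
  filter_upwards [eventually_ge_atTop 1] with k hk
  rw [F13Coeff_succ hb₁ hb₂ hb₃, norm_mul, mul_div_cancel_left₀ _ (norm_ne_zero_iff.mpr
    (F13Coeff_ne_zero ha hb₁ hb₂ hb₃ k)), Real.norm_eq_abs, abs_div,
    abs_of_pos (by positivity : (0:ℝ) < (b₁ + k) * (b₂ + k) * (b₃ + k) * (k + 1))]
  exact abs_hypergeometric_ratio_le hb₁ hb₂ hb₃ hk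

end F13Coeff

lemma F13_eq_ofScalarsSum (a b₁ b₂ b₃ : ℝ) :
    F13 a b₁ b₂ b₃ = FormalMultilinearSeries.ofScalarsSum (F13Coeff a b₁ b₂ b₃) := by
  ext z
  rw [FormalMultilinearSeries.ofScalars_sum_eq, F13]
  exact tsum_congr fun k => by simp only [F13Coeff, smul_eq_mul]; ring

lemma F13_zero (a b₁ b₂ b₃ : ℝ) : F13 a b₁ b₂ b₃ 0 = 1 := by
  rw [F13, tsum_eq_single 0 fun k hk => by simp [hk]]
  simp [poch]

lemma analyticAt_F13 {a b₁ b₂ b₃ : ℝ} (ha : ∀ i : ℕ, a + i ≠ 0) (hb₁ : 0 < b₁) (hb₂ : 0 < b₂)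
    (hb₃ : 0 < b₃) (z : ℝ) : AnalyticAt ℝ (F13 a b₁ b₂ b₃) z := by
  have hr := FormalMultilinearSeries.ofScalars_radius_eq_top_of_tendsto ℝ _
    (.of_forall (F13Coeff_ne_zero ha hb₁ hb₂ hb₃)) (tendsto_F13Coeff_ratio ha hb₁ hb₂ hb₃)
  rw [F13_eq_ofScalarsSum]
  exact (FormalMultilinearSeries.hasFPowerSeriesOnBall _ (by simp [hr])).analyticAt_of_mem
    (by simp [hr])

section FlatAtZero

variable {𝕜 : Type*} [NontriviallyNormedField 𝕜]

theorem AnalyticAt.comp_pow_div {g : 𝕜 → 𝕜} (hg : AnalyticAt 𝕜 g 0) (c : 𝕜) {n : ℕ}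
    (hn : n ≠ 0) : AnalyticAt 𝕜 (fun x => g (x ^ n / c)) 0 := by
  have hg' : AnalyticAt 𝕜 g (0 ^ n / c) := by simpa [hn] using hg
  exact AnalyticAt.comp (f := fun x : 𝕜 => x ^ n / c) hg' (by fun_prop)

variable [CharZero 𝕜] [CompleteSpace 𝕜]

theorem iteratedDeriv_comp_pow_div_eq_zero {g : 𝕜 → 𝕜} (hg : AnalyticAt 𝕜 g 0) (c : 𝕜)
    {n i : ℕ} (hi : 0 < i) (hin : i < n) :
    iteratedDeriv i (fun x => g (x ^ n / c)) 0 = 0 := by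
  have hn : n ≠ 0 := by omega
  set φ : 𝕜 → 𝕜 := fun x => x ^ n / c
  have hφ0 : φ 0 = 0 := by simp [φ, hn]
  have hφ : AnalyticAt 𝕜 φ 0 := by fun_prop
  have hgφ : AnalyticAt 𝕜 (fun z => g z - g 0) (φ 0) := by rw [hφ0]; fun_prop
  have hg_ord : 1 ≤ analyticOrderAt (fun z => g z - g 0) (φ 0) :=
    Order.one_le_iff_ne_zero.mpr (analyticOrderAt_ne_zero.mpr ⟨hgφ, by simp [hφ0]⟩)
  have hφ_ord : (n : ℕ∞) ≤ analyticOrderAt (φ · - φ 0) 0 :=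
    (natCast_le_analyticOrderAt (by fun_prop)).mpr
      ⟨fun _ => c⁻¹, analyticAt_const, .of_forall fun x => by simp [φ, hn, div_eq_mul_inv]⟩
  have hord : (n : ℕ∞) ≤ analyticOrderAt (fun x => g (φ x) - g 0) 0 := by
    rw [← Function.comp_def (fun z => g z - g 0) φ, hgφ.analyticOrderAt_comp hφ]
    simpa using mul_le_mul' hg_ord hφ_ord
  have hgφ' : AnalyticAt 𝕜 (fun x => g (φ x)) 0 := hg.comp_pow_div c hn
  have h := (natCast_le_analyticOrderAt_iff_iteratedDeriv_eq_zero
    (hgφ'.sub analyticAt_const)).mp hord i hin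
  rwa [iteratedDeriv_sub hgφ'.contDiffAt contDiffAt_const, iteratedDeriv_const,
    if_neg hi.ne', sub_zero] at h

attribute [local fun_prop] AnalyticAt.contDiffAt in
theorem iteratedDeriv_linear_sub_sq_mul_sub_mul {h₁ h₂ : 𝕜 → 𝕜} (ha₁ : AnalyticAt 𝕜 h₁ 0)
    (ha₂ : AnalyticAt 𝕜 h₂ 0) (hd₁ : ∀ i, 0 < i → i < 4 → iteratedDeriv i h₁ 0 = 0)
    (hd₂ : ∀ i, 0 < i → i < 4 → iteratedDeriv i h₂ 0 = 0) (α β γ : 𝕜) :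
    iteratedDeriv 1 (fun x => α * x - β * x ^ 2 * h₁ x - γ * h₂ x) 0 = α ∧
    iteratedDeriv 2 (fun x => α * x - β * x ^ 2 * h₁ x - γ * h₂ x) 0 = -(2 * β * h₁ 0) ∧
    iteratedDeriv 3 (fun x => α * x - β * x ^ 2 * h₁ x - γ * h₂ x) 0 = 0 := by
  simp (discharger := fun_prop) only [iteratedDeriv_fun_sub, iteratedDeriv_fun_mul,
    iteratedDeriv_fun_pow_zero, iteratedDeriv_const]
  simp [Finset.sum_range_succ, hd₁, hd₂, iteratedDeriv_succ', mul_comm β]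

end FlatAtZero

theorem mullinsY_boundary_values_general (m B : ℝ) (t : ℝ) :
    derivWithin (fun x : ℝ => mullinsY m B x t) (Set.Ici 0) 0 = m / 2 ∧
    iteratedDerivWithin 2 (fun x : ℝ => mullinsY m B x t) (Set.Ici 0) 0
      = -m / (2 * Real.sqrt 2 * (B * t) ^ ((1:ℝ)/4) * Real.Gamma (3/4)) ∧
    iteratedDerivWithin 3 (fun x : ℝ => mullinsY m B x t) (Set.Ici 0) 0 = 0 := by
  have hF₁ : AnalyticAt ℝ (F13 (1/4) (3/4) (5/4) (3/2)) 0 :=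
    analyticAt_F13 (fun i => by positivity) (by norm_num) (by norm_num) (by norm_num) 0
  have hF₂ : AnalyticAt ℝ (F13 (-1/4) (1/4) (1/2) (3/4)) 0 :=
    analyticAt_F13 (by rintro (_ | i) <;> push_cast <;> linarith) (by norm_num) (by norm_num)
      (by norm_num) 0
  set h₁ := fun x : ℝ => F13 (1/4) (3/4) (5/4) (3/2) (x ^ 4 / (256 * B * t))
  set h₂ := fun x : ℝ => F13 (-1/4) (1/4) (1/2) (3/4) (x ^ 4 / (256 * B * t))
  set C₁ := m / (4 * Real.sqrt 2 * (B * t) ^ ((1:ℝ)/4) * Real.Gamma (3/4)) with hC₁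
  set C₂ := m * (B * t) ^ ((1:ℝ)/4) / (2 * Real.sqrt 2 * Real.Gamma (5/4))
  have hy : (fun x => mullinsY m B x t) = fun x => m / 2 * x - C₁ * x ^ 2 * h₁ x - C₂ * h₂ x := by
    ext x; simp only [mullinsY, h₁, h₂, C₁, C₂]; ring
  have ha₁ : AnalyticAt ℝ h₁ 0 := hF₁.comp_pow_div _ four_ne_zero
  have ha₂ : AnalyticAt ℝ h₂ 0 := hF₂.comp_pow_div _ four_ne_zero
  have hy_an : AnalyticAt ℝ (fun x => m / 2 * x - C₁ * x ^ 2 * h₁ x - C₂ * h₂ x) 0 := by fun_prop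
  obtain ⟨d₁, d₂, d₃⟩ := iteratedDeriv_linear_sub_sq_mul_sub_mul ha₁ ha₂
    (fun _ => iteratedDeriv_comp_pow_div_eq_zero hF₁ _)
    (fun _ => iteratedDeriv_comp_pow_div_eq_zero hF₂ _) (m / 2) C₁ C₂
  rw [hy, ← iteratedDerivWithin_one]
  simp only [iteratedDerivWithin_eq_iteratedDeriv (uniqueDiffOn_Ici 0) hy_an.contDiffAt
    Set.self_mem_Ici]
  refine ⟨d₁, d₂.trans ?_, d₃⟩
  rw [show h₁ 0 = 1 by simp [h₁, F13_zero], hC₁]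
  ring

/-- Boundary values of the Mullins profile at `x = 0` (one-sided derivatives):
`∂y₀/∂x(0,t) = m/2`, `∂²y₀/∂x²(0,t) = -m/(2√2 (Bt)^{1/4} Γ(3/4))`, `∂³y₀/∂x³(0,t) = 0`. -/
theorem mullinsY_boundary_values (m B : ℝ) (hB : 0 < B) (t : ℝ) (ht : 0 < t) :
    derivWithin (fun x : ℝ => mullinsY m B x t) (Set.Ici 0) 0 = m / 2 ∧
    iteratedDerivWithin 2 (fun x : ℝ => mullinsY m B x t) (Set.Ici 0) 0
      = -m / (2 * Real.sqrt 2 * (B * t) ^ ((1:ℝ)/4) * Real.Gamma (3/4)) ∧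
    iteratedDerivWithin 3 (fun x : ℝ => mullinsY m B x t) (Set.Ici 0) 0 = 0 :=
  mullinsY_boundary_values_general m B t
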